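/- arXiv:2304.06965 — 2 statements merged into one kernel-verified Lean document; each statement's English description precedes it below -/
import Mathlib

section
/- Let (α_ℓ) be a sequence with 0 ≤ α_ℓ ≤ B for all ℓ (B > 0) and Σ_ℓ α_ℓ ≥ c(n+1) for some c with 0 < c ≤ B. Then Σ_{ℓ=0}^∞ α_ℓ(2ℓ+1) ≥ B · ⌊(n+1)c/B⌋². -/
/-! Put `m = ⌊(n+1)c/B⌋₊`, so that `B m ≤ Σ α`. Since the weights `2ℓ + 1` increase, the sum
`Σ α_ℓ (2ℓ + 1)` under the constraints `0 ≤ α_ℓ ≤ B`, `Σ α_ℓ ≥ B m` is smallest when the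
mass is pushed to the front: `α = B` on `ℓ < m`. That configuration gives `B Σ_{ℓ<m} (2ℓ+1) = B m²`.
For any increasing weight `w`, this is the termwise inequality
`(α_ℓ - B·[ℓ < m]) (w_ℓ - w_m) ≥ 0` summed over `ℓ`. -/

open scoped ENNReal
open Finset

lemma sum_range_two_mul_add_one (m : ℕ) : ∑ ℓ ∈ range m, (2 * (ℓ : ℝ) + 1) = (m : ℝ) ^ 2 := by
  induction m with
  | zero => simp
  | succ k ih => rw [sum_range_succ, ih]; push_cast; ring

lemma ENNReal.tsum_ofReal_eq_top_of_not_summable {ι : Type*} {f : ι → ℝ} (hf : ∀ i, 0 ≤ f i)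
    (h : ¬Summable f) : ∑' i, ENNReal.ofReal (f i) = ∞ := by
  by_contra hne
  exact h (by simpa [ENNReal.toReal_ofReal (hf _)] using ENNReal.summable_toReal hne)

lemma mul_sum_range_le_tsum_mul_of_monotone {α w : ℕ → ℝ} {B : ℝ} {m : ℕ}
    (h0 : ∀ ℓ, 0 ≤ α ℓ) (h1 : ∀ ℓ, α ℓ ≤ B) (hw : Monotone w) (hwm : 0 ≤ w m)
    (hα : Summable α) (hαw : Summable fun ℓ => α ℓ * w ℓ) (hmass : B * m ≤ ∑' ℓ, α ℓ) :
    B * ∑ ℓ ∈ range m, w ℓ ≤ ∑' ℓ, α ℓ * w ℓ := by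
  have tail : w m * ∑' i, α (i + m) ≤ ∑' i, α (i + m) * w (i + m) := by
    rw [← tsum_mul_left]
    refine (((summable_nat_add_iff m).2 hα).mul_left _).tsum_le_tsum (fun i => ?_)
      ((summable_nat_add_iff m).2 hαw)
    rw [mul_comm]
    exact mul_le_mul_of_nonneg_left (hw (by omega)) (h0 _)
  have head : w m * (∑ ℓ ∈ range m, α ℓ - B * m) ≤
      ∑ ℓ ∈ range m, α ℓ * w ℓ - B * ∑ ℓ ∈ range m, w ℓ :=
    calc w m * (∑ ℓ ∈ range m, α ℓ - B * m) = ∑ ℓ ∈ range m, (α ℓ - B) * w m := by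
          simp only [← sum_mul, sum_sub_distrib, sum_const, card_range, nsmul_eq_mul]; ring
      _ ≤ ∑ ℓ ∈ range m, (α ℓ - B) * w ℓ := sum_le_sum fun ℓ hℓ =>
          mul_le_mul_of_nonpos_left (hw (mem_range.1 hℓ).le) (sub_nonpos.2 (h1 ℓ))
      _ = ∑ ℓ ∈ range m, α ℓ * w ℓ - B * ∑ ℓ ∈ range m, w ℓ := by
          simp only [sub_mul, sum_sub_distrib, mul_sum]
  have surplus : 0 ≤ w m * (∑' ℓ, α ℓ - B * m) := mul_nonneg hwm (sub_nonneg.2 hmass)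
  have := hα.sum_add_tsum_nat_add m
  have := hαw.sum_add_tsum_nat_add m
  nlinarith

theorem stmt_7_general (α : ℕ → ℝ) (B c : ℝ) (n : ℕ) (hB : 0 < B)
    (h0 : ∀ ℓ, 0 ≤ α ℓ) (h1 : ∀ ℓ, α ℓ ≤ B) (hc : 0 < c)
    (hsum : Summable α) (htot : c * ((n : ℝ) + 1) ≤ ∑' ℓ : ℕ, α ℓ) :
    ENNReal.ofReal (B * ((⌊((n : ℝ) + 1) * c / B⌋₊ : ℕ) : ℝ) ^ 2) ≤
      ∑' ℓ : ℕ, ENNReal.ofReal (α ℓ * (2 * (ℓ : ℝ) + 1)) := by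
  set m := ⌊((n : ℝ) + 1) * c / B⌋₊
  have hmass : B * m ≤ ∑' ℓ, α ℓ := by
    have hm : (m : ℝ) ≤ ((n : ℝ) + 1) * c / B := Nat.floor_le (by positivity)
    rw [le_div_iff₀ hB] at hm
    linarith
  have hnonneg : ∀ ℓ : ℕ, 0 ≤ α ℓ * (2 * (ℓ : ℝ) + 1) := fun ℓ => by have := h0 ℓ; positivity
  by_cases hs : Summable fun ℓ : ℕ => α ℓ * (2 * (ℓ : ℝ) + 1)
  · rw [← ENNReal.ofReal_tsum_of_nonneg hnonneg hs, ← sum_range_two_mul_add_one]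
    exact ENNReal.ofReal_le_ofReal <| mul_sum_range_le_tsum_mul_of_monotone h0 h1
      (fun i j hij => by gcongr) (by positivity) hsum hs hmass
  · rw [ENNReal.tsum_ofReal_eq_top_of_not_summable hnonneg hs]
    exact le_top

theorem stmt_7 (α : ℕ → ℝ) (B c : ℝ) (n : ℕ) (hB : 0 < B)
    (h0 : ∀ ℓ, 0 ≤ α ℓ) (h1 : ∀ ℓ, α ℓ ≤ B) (hc : 0 < c) (hcB : c ≤ B)
    (hsum : Summable α) (htot : c * ((n : ℝ) + 1) ≤ ∑' ℓ : ℕ, α ℓ) :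
    ENNReal.ofReal (B * ((⌊((n : ℝ) + 1) * c / B⌋₊ : ℕ) : ℝ) ^ 2) ≤
      ∑' ℓ : ℕ, ENNReal.ofReal (α ℓ * (2 * (ℓ : ℝ) + 1)) :=
  stmt_7_general α B c n hB h0 h1 hc hsum htot
end

section
/- Under the hypotheses of the abstract mean-dispersion principle with λ_ℓ = 2ℓ+1, if in addition equality Σ_{k=0}^n Σ_ℓ λ_ℓ|⟨f_k,e_ℓ⟩|² = (n+1)² holds for every n ≤ n₀, then each f_k (0 ≤ k ≤ n₀) equals c_k e_k for some c_k ∈ ℂ with |c_k| = 1. -/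
open scoped ENNReal
open Finset

/-!
Telescoping the hypothesis gives `∑_ℓ (2ℓ+1) |⟨f_k, e_ℓ⟩|² = 2k+1` for each `k ≤ n₀`, while
Parseval gives `∑_ℓ |⟨f_k, e_ℓ⟩|² = 1`. By strong induction `f_j ∈ ℂ e_j` for `j < k`, so
orthogonality kills the coefficients of `f_k` below `k`; a probability weight on `[k, ∞)` whose
`(2ℓ+1)`-mean is `2k+1` must be the point mass at `k`, hence `f_k` is a unimodular multiple of `e_k`.
-/

section HilbertBasis

variable {ι 𝕜 E : Type*} [RCLike 𝕜] [NormedAddCommGroup E] [InnerProductSpace 𝕜 E]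

theorem HilbertBasis.hasSum_norm_repr_sq (b : HilbertBasis ι 𝕜 E) (x : E) :
    HasSum (fun i => ‖b.repr x i‖ ^ 2) (‖x‖ ^ 2) := by
  simpa [Real.rpow_two] using lp.hasSum_norm (p := 2) (by norm_num) (b.repr x)

theorem HilbertBasis.tsum_enorm_inner_sq (b : HilbertBasis ι 𝕜 E) (x : E) :
    ∑' i, ‖(inner 𝕜 x (b i) : 𝕜)‖ₑ ^ 2 = ‖x‖ₑ ^ 2 := by
  have h := b.hasSum_norm_repr_sq x
  simp only [b.repr_apply_apply, norm_inner_symm] at h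
  simp_rw [← ofReal_norm, ← ENNReal.ofReal_pow (norm_nonneg _),
    ← ENNReal.ofReal_tsum_of_nonneg (fun _ => sq_nonneg _) h.summable, h.tsum_eq]

theorem HilbertBasis.eq_repr_smul_of_repr_eq_zero (b : HilbertBasis ι 𝕜 E) {x : E} {i : ι}
    (h : ∀ j ≠ i, b.repr x j = 0) : x = b.repr x i • b i :=
  (b.hasSum_repr x).unique (hasSum_single i fun j hj => by simp [h j hj])

end HilbertBasis

theorem ENNReal.eq_zero_of_tsum_mul_eq_of_strictMono {ι : Type*} [LinearOrder ι]
    {c w : ι → ℝ≥0∞} {k : ι} (hc : StrictMono c) (hw : ∑' i, w i = 1)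
    (hlt : ∀ i < k, w i = 0) (hsum : ∑' i, c i * w i = c k) : ∀ i ≠ k, w i = 0 := by
  intro i hi
  rcases lt_or_gt_of_ne hi with hik | hki
  · exact hlt i hik
  have hsplit : ∀ j, c j * w j = c k * w j + (c j - c k) * w j := by
    intro j
    rcases lt_or_ge j k with hjk | hkj
    · simp [hlt j hjk]
    · rw [← add_mul, add_tsub_cancel_of_le (hc.monotone hkj)]
  have hexcess : ∑' j, (c j - c k) * w j = 0 := by
    rw [tsum_congr hsplit, ENNReal.tsum_add, ENNReal.tsum_mul_left, hw, mul_one] at hsum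
    exact (ENNReal.add_right_inj (hc hki).ne_top).mp (hsum.trans (add_zero _).symm)
  exact (mul_eq_zero.mp (ENNReal.tsum_eq_zero.mp hexcess i)).resolve_left
    (tsub_pos_of_lt (hc hki)).ne'

theorem ENNReal.eq_two_mul_add_one_of_sum_range_eq_sq {a : ℕ → ℝ≥0∞} {N : ℕ}
    (h : ∀ n ≤ N, ∑ k ∈ range (n + 1), a k = ((n : ℝ≥0∞) + 1) ^ 2) :
    ∀ n ≤ N, a n = 2 * n + 1 := by
  intro n hn
  cases n with
  | zero => simpa using h 0 hn
  | succ m =>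
    have hsucc := h (m + 1) hn
    rw [sum_range_succ, h m (by omega)] at hsucc
    refine (ENNReal.add_right_inj (by finiteness)).mp (hsucc.trans ?_)
    push_cast
    ring

theorem Orthonormal.exists_eq_smul_of_tsum_mul_enorm_inner_sq_eq {𝕜 H : Type*} [RCLike 𝕜]
    [NormedAddCommGroup H] [InnerProductSpace 𝕜 H] {f : ℕ → H} (hf : Orthonormal 𝕜 f)
    (e : HilbertBasis ℕ 𝕜 H) {c : ℕ → ℝ≥0∞} (hc : StrictMono c) {N : ℕ}
    (hsum : ∀ k ≤ N, ∑' ℓ, c ℓ * ‖(inner 𝕜 (f k) (e ℓ) : 𝕜)‖ₑ ^ 2 = c k) :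
    ∀ k ≤ N, ∃ a : 𝕜, ‖a‖ = 1 ∧ f k = a • e k := by
  intro k
  induction k using Nat.strong_induction_on with
  | _ k ih =>
  intro hk
  have hlt : ∀ j < k, inner 𝕜 (f k) (e j) = 0 := by
    intro j hj
    obtain ⟨a, ha, hfj⟩ := ih j hj (hj.le.trans hk)
    have hkj : inner 𝕜 (f k) (f j) = 0 := hf.2 hj.ne'
    rw [hfj, inner_smul_right] at hkj
    exact (mul_eq_zero.mp hkj).resolve_left (by rintro rfl; simp at ha)
  have hne : ∀ ℓ ≠ k, e.repr (f k) ℓ = 0 := by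
    have hw : ∑' ℓ, ‖(inner 𝕜 (f k) (e ℓ) : 𝕜)‖ₑ ^ 2 = 1 := by
      rw [e.tsum_enorm_inner_sq, ← ofReal_norm, hf.1 k]; simp
    have hzero := ENNReal.eq_zero_of_tsum_mul_eq_of_strictMono hc hw
      (fun j hj => by simp [hlt j hj]) (hsum k hk)
    intro ℓ hℓ
    rw [e.repr_apply_apply, inner_eq_zero_symm]
    simpa using hzero ℓ hℓ
  have hfk := e.eq_repr_smul_of_repr_eq_zero hne
  refine ⟨_, ?_, hfk⟩
  simpa [hf.1 k, norm_smul, e.orthonormal.1 k] using (congrArg norm hfk).symm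

theorem stmt_11_general {H : Type*} [NormedAddCommGroup H] [InnerProductSpace ℂ H]
    (e : HilbertBasis ℕ ℂ H) (f : ℕ → H) (hf : Orthonormal ℂ f)
    (n₀ : ℕ)
    (heq : ∀ n ≤ n₀,
      ∑ k ∈ Finset.range (n + 1), ∑' ℓ : ℕ,
        ENNReal.ofReal ((2 * (ℓ : ℝ) + 1) * ‖(inner ℂ (f k) (e ℓ) : ℂ)‖ ^ 2) =
        ((n : ℝ≥0∞) + 1) ^ 2) :
    ∃ c : ℕ → ℂ, ∀ k ≤ n₀, ‖c k‖ = 1 ∧ f k = c k • e k := by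
  have hofReal : ∀ (ℓ : ℕ) (z : ℂ),
      ENNReal.ofReal ((2 * (ℓ : ℝ) + 1) * ‖z‖ ^ 2) = (2 * ℓ + 1) * ‖z‖ₑ ^ 2 := by
    intro ℓ z
    rw [ENNReal.ofReal_mul (by positivity), ENNReal.ofReal_pow (norm_nonneg _), ofReal_norm]
    norm_cast
  have hmono : StrictMono fun ℓ : ℕ => 2 * (ℓ : ℝ≥0∞) + 1 := by
    intro a b hab
    dsimp only
    exact_mod_cast (by omega : 2 * a + 1 < 2 * b + 1)
  simp only [hofReal] at heq
  choose! c hc using hf.exists_eq_smul_of_tsum_mul_enorm_inner_sq_eq e hmono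
    (ENNReal.eq_two_mul_add_one_of_sum_range_eq_sq heq)
  exact ⟨c, hc⟩

theorem stmt_11 {H : Type*} [NormedAddCommGroup H] [InnerProductSpace ℂ H]
    [CompleteSpace H] (e : HilbertBasis ℕ ℂ H) (f : ℕ → H) (hf : Orthonormal ℂ f)
    (n₀ : ℕ)
    (heq : ∀ n ≤ n₀,
      ∑ k ∈ Finset.range (n + 1), ∑' ℓ : ℕ,
        ENNReal.ofReal ((2 * (ℓ : ℝ) + 1) * ‖(inner ℂ (f k) (e ℓ) : ℂ)‖ ^ 2) =
        ((n : ℝ≥0∞) + 1) ^ 2) :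
    ∃ c : ℕ → ℂ, ∀ k ≤ n₀, ‖c k‖ = 1 ∧ f k = c k • e k :=
  stmt_11_general e f hf n₀ heq
end
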